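/- For every k ≥ 4, γ(P(6k,k)) ≤ ⌈10k/3⌉: the generalized Petersen graph P(6k,k) admits a dominating set of size ⌈10k/3⌉. -/

import Mathlib

open SimpleGraph

/-- The generalized Petersen graph P(n,k): outer vertices `Sum.inl i`,
inner vertices `Sum.inr i`, indices in `ZMod n`. -/
def petersen (n k : ℕ) : SimpleGraph (ZMod n ⊕ ZMod n) :=
  SimpleGraph.fromRel (fun a b =>
    match a, b with
    | Sum.inl i, Sum.inl j => j = i + 1
    | Sum.inl i, Sum.inr j => j = i
    | Sum.inr i, Sum.inr j => j = i + (k : ZMod n)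
    | _, _ => False)

/-- S is a dominating set: N[S] = V. -/
def IsDominating {V : Type*} (G : SimpleGraph V) (S : Set V) : Prop :=
  ∀ v, v ∈ S ∨ ∃ u ∈ S, G.Adj u v

/-- The domination number: minimum cardinality of a (finite) dominating set. -/
noncomputable def gamma {V : Type*} (G : SimpleGraph V) : ℕ :=
  sInf {m | ∃ S : Finset V, IsDominating G ↑S ∧ S.card = m}

/-!
The inner vertices of `P(6k,k)` form `k` disjoint hexagons `u_j, u_{j+k}, …, u_{j+5k}`. The inner
vertices `u_i` with `i ∈ [0,k) ∪ [3k,4k)` are antipodal pairs on these hexagons, so they dominate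
every inner vertex, and through the spokes also the outer vertices `v_i` of those two blocks. The two
remaining outer paths of `2k` vertices are dominated by every third vertex, `⌈2k/3⌉` each, for
`2k + 2⌈2k/3⌉ = ⌈10k/3⌉` vertices when `k ≢ 2 (mod 3)`. For `k ≡ 2 (mod 3)` this is one too many;
there the inner blocks are shifted to `[3,k-1) ∪ [3k+3,4k+3)` and the hexagons this breaks are
repaired by `u_k`, `u_{k+2}`, `u_{2k+1}`, `u_{6k-1}`. The outer gaps left by these `2k` inner
vertices all have lengths divisible by three, so every third outer vertex covers them without waste.
-/

open Finset

theorem isDominating_iff_forall_exists_eq_or_adj {V : Type*} (G : SimpleGraph V) (S : Set V) :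
    IsDominating G S ↔ ∀ v, ∃ u ∈ S, u = v ∨ G.Adj u v := by
  refine forall_congr' fun v => ⟨?_, ?_⟩
  · rintro (hv | ⟨u, hu, huv⟩)
    exacts [⟨v, hv, .inl rfl⟩, ⟨u, hu, .inr huv⟩]
  · rintro ⟨u, hu, rfl | huv⟩
    exacts [.inl hu, .inr ⟨u, hu, huv⟩]

theorem gamma_le_card {V : Type*} {G : SimpleGraph V} {S : Finset V} (h : IsDominating G ↑S) :
    gamma G ≤ #S :=
  Nat.sInf_le ⟨S, h, rfl⟩

section Petersen

variable {n k : ℕ}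

theorem petersen_adj_inl_inr (a : ZMod n) : (petersen n k).Adj (.inl a) (.inr a) := by
  simp [petersen]

theorem petersen_adj_inr_inl (a : ZMod n) : (petersen n k).Adj (.inr a) (.inl a) :=
  (petersen_adj_inl_inr a).symm

theorem petersen_eq_or_adj_inl {a b : ZMod n} (h : a = b ∨ a + 1 = b ∨ b + 1 = a) :
    Sum.inl a = (Sum.inl b : ZMod n ⊕ ZMod n) ∨ (petersen n k).Adj (.inl a) (.inl b) := by
  by_cases hab : a = b
  · exact .inl (congrArg _ hab)
  · simp only [petersen, fromRel_adj, ne_eq, Sum.inl.injEq]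
    tauto

theorem petersen_eq_or_adj_inr {a b : ZMod n} (h : a = b ∨ a + k = b ∨ b + k = a) :
    Sum.inr a = (Sum.inr b : ZMod n ⊕ ZMod n) ∨ (petersen n k).Adj (.inr a) (.inr b) := by
  by_cases hab : a = b
  · exact .inl (congrArg _ hab)
  · simp only [petersen, fromRel_adj, ne_eq, Sum.inr.injEq]
    tauto

/-- `i ≡ m - d`, `m` or `m + d` modulo `n`, spelled without `%` so that `omega` can decide it. -/
def CycNear (n d i m : ℕ) : Prop :=
  i = m ∨ i + d = m ∨ m + d = i ∨ i + d = m + n ∨ m + d = i + n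

theorem CycNear.natCast {d i m : ℕ} (h : CycNear n d i m) :
    (i : ZMod n) = m ∨ (i : ZMod n) + d = m ∨ (m : ZMod n) + d = i := by
  rcases h with h | h | h | h | h <;>
    [left; (right; left); (right; right); (right; left); (right; right)] <;>
    simpa using congrArg (Nat.cast : ℕ → ZMod n) h

theorem exists_mem_cycNear_iff {d m : ℕ} {U : Finset ℕ} :
    (∃ i ∈ U, CycNear n d i m) ↔ m ∈ U ∨ m + d ∈ U ∨ (d ≤ m ∧ m - d ∈ U) ∨
      (n ≤ m + d ∧ m + d - n ∈ U) ∨ (d ≤ m + n ∧ m + n - d ∈ U) := by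
  constructor
  · rintro ⟨i, hi, rfl | h | rfl | h | h⟩
    · exact .inl hi
    · exact .inr <| .inr <| .inl ⟨by omega, by rwa [← h, Nat.add_sub_cancel]⟩
    · exact .inr <| .inl hi
    · exact .inr <| .inr <| .inr <| .inr ⟨by omega, by rwa [← h, Nat.add_sub_cancel]⟩
    · exact .inr <| .inr <| .inr <| .inl ⟨by omega, by rwa [h, Nat.add_sub_cancel]⟩
  · rintro (h | h | ⟨_, h⟩ | ⟨_, h⟩ | ⟨_, h⟩) <;> exact ⟨_, h, by unfold CycNear; omega⟩

/-- `U` indexes inner vertices `u_i`, `V` outer vertices `v_i`. -/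
def IsPetersenCover (n k : ℕ) (U V : Finset ℕ) : Prop :=
  (∀ m < n, m ∈ U ∨ ∃ i ∈ V, CycNear n 1 i m) ∧ ∀ m < n, m ∈ V ∨ ∃ i ∈ U, CycNear n k i m

def petersenVertices (n : ℕ) (U V : Finset ℕ) : Finset (ZMod n ⊕ ZMod n) :=
  (V.image Nat.cast).disjSum (U.image Nat.cast)

theorem IsPetersenCover.isDominating [NeZero n] {U V : Finset ℕ} (h : IsPetersenCover n k U V) :
    IsDominating (petersen n k) ↑(petersenVertices n U V) := by
  rw [petersenVertices, isDominating_iff_forall_exists_eq_or_adj]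
  rintro (x | x) <;> obtain ⟨m, hm, rfl⟩ : ∃ m < n, (m : ZMod n) = x :=
    ⟨x.val, x.val_lt, x.natCast_zmod_val⟩
  · rcases h.1 m hm with hmU | ⟨i, hiV, hi⟩
    · exact ⟨.inr m, by simpa using ⟨m, hmU, rfl⟩, .inr (petersen_adj_inr_inl _)⟩
    · exact ⟨.inl i, by simpa using ⟨i, hiV, rfl⟩,
        petersen_eq_or_adj_inl (by simpa using hi.natCast)⟩
  · rcases h.2 m hm with hmV | ⟨i, hiU, hi⟩
    · exact ⟨.inl m, by simpa using ⟨m, hmV, rfl⟩, .inr (petersen_adj_inl_inr _)⟩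
    · exact ⟨.inr i, by simpa using ⟨i, hiU, rfl⟩, petersen_eq_or_adj_inr hi.natCast⟩

theorem IsPetersenCover.gamma_le [NeZero n] {U V : Finset ℕ} (h : IsPetersenCover n k U V) :
    gamma (petersen n k) ≤ #U + #V := by
  refine (gamma_le_card h.isDominating).trans ?_
  rw [petersenVertices, card_disjSum, add_comm]
  exact add_le_add card_image_le card_image_le

end Petersen

def everyThird (a c : ℕ) : Finset ℕ :=
  (range c).image (a + 3 * ·)

theorem mem_everyThird {a c i : ℕ} :
    i ∈ everyThird a c ↔ a ≤ i ∧ i < a + 3 * c ∧ (i - a) % 3 = 0 := by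
  simp only [everyThird, mem_image, mem_range]
  constructor
  · rintro ⟨t, ht, rfl⟩
    omega
  · rintro ⟨hai, hic, hmod⟩
    exact ⟨(i - a) / 3, by omega, by omega⟩

theorem card_everyThird_le (a c : ℕ) : #(everyThird a c) ≤ c :=
  card_image_le.trans (card_range c).le

theorem exists_mem_cycNear_one_of_everyThird_subset {n a c m : ℕ} {V : Finset ℕ}
    (hV : everyThird a c ⊆ V) (h₁ : a ≤ m + 1) (h₂ : m + 2 ≤ a + 3 * c) :
    ∃ i ∈ V, CycNear n 1 i m :=
  ⟨a + 3 * ((m + 1 - a) / 3), hV (mem_image_of_mem _ (mem_range.2 (by omega))),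
    by unfold CycNear; omega⟩

def blockInner (k : ℕ) : Finset ℕ := range k ∪ Ico (3 * k) (4 * k)

def blockOuter (k : ℕ) : Finset ℕ :=
  everyThird (k + 1) ((2 * k + 2) / 3) ∪ everyThird (4 * k + 1) ((2 * k + 2) / 3)

theorem isPetersenCover_block (k : ℕ) :
    IsPetersenCover (6 * k) k (blockInner k) (blockOuter k) := by
  have mem_inner {m : ℕ} (h : m < k ∨ 3 * k ≤ m ∧ m < 4 * k) : m ∈ blockInner k := by
    simpa only [blockInner, mem_union, mem_range, mem_Ico] using h
  refine ⟨fun m hm => ?_, fun m hm => ?_⟩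
  · rcases (by omega : m < k ∨ k ≤ m ∧ m < 3 * k ∨ 3 * k ≤ m ∧ m < 4 * k ∨ 4 * k ≤ m) with
      h | h | h | h
    · exact .inl (mem_inner (by omega))
    · exact .inr (exists_mem_cycNear_one_of_everyThird_subset subset_union_left
        (by omega) (by omega))
    · exact .inl (mem_inner (by omega))
    · exact .inr (exists_mem_cycNear_one_of_everyThird_subset subset_union_right
        (by omega) (by omega))
  · rw [exists_mem_cycNear_iff]
    simp only [blockInner, mem_union, mem_range, mem_Ico]
    omega

theorem card_blockInner_le (k : ℕ) : #(blockInner k) ≤ 2 * k := by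
  grw [blockInner, card_union_le, card_range, Nat.card_Ico]
  omega

theorem card_blockOuter_le (k : ℕ) : #(blockOuter k) ≤ 2 * ((2 * k + 2) / 3) := by
  grw [blockOuter, card_union_le, card_everyThird_le, card_everyThird_le]
  omega

def shiftedInner (k : ℕ) : Finset ℕ :=
  Ico 3 (k - 1) ∪ Ico (3 * k + 3) (4 * k + 3) ∪ {k, k + 2, 2 * k + 1, 6 * k - 1}

def shiftedOuter (k : ℕ) : Finset ℕ :=
  everyThird 1 1 ∪ everyThird k 1 ∪ everyThird (k + 4) ((k - 2) / 3) ∪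
    everyThird (2 * k + 3) ((k + 1) / 3) ∪ everyThird (4 * k + 4) ((2 * k - 4) / 3)

theorem isPetersenCover_shifted {k : ℕ} (hk3 : k % 3 = 2) :
    IsPetersenCover (6 * k) k (shiftedInner k) (shiftedOuter k) := by
  have mem_inner {m : ℕ} (h : 3 ≤ m ∧ m < k - 1 ∨ 3 * k + 3 ≤ m ∧ m < 4 * k + 3 ∨ m = k ∨
      m = k + 2 ∨ m = 2 * k + 1 ∨ m = 6 * k - 1) : m ∈ shiftedInner k := by
    simp only [shiftedInner, mem_union, mem_Ico, mem_insert, mem_singleton]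
    tauto
  have station (a c : ℕ) {m : ℕ} (h₁ : a ≤ m + 1) (h₂ : m + 2 ≤ a + 3 * c)
      (hV : everyThird a c ⊆ shiftedOuter k := by intro _ hi; simp [shiftedOuter, hi]) :
      m ∈ shiftedInner k ∨ ∃ i ∈ shiftedOuter k, CycNear (6 * k) 1 i m :=
    .inr (exists_mem_cycNear_one_of_everyThird_subset hV h₁ h₂)
  refine ⟨fun m hm => ?_, fun m hm => ?_⟩
  · rcases (by omega : m ≤ 2 ∨ 3 ≤ m ∧ m ≤ k - 2 ∨ k - 1 ≤ m ∧ m ≤ k + 1 ∨ m = k + 2 ∨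
      k + 3 ≤ m ∧ m ≤ 2 * k ∨ m = 2 * k + 1 ∨ 2 * k + 2 ≤ m ∧ m ≤ 3 * k + 2 ∨
      3 * k + 3 ≤ m ∧ m ≤ 4 * k + 2 ∨ 4 * k + 3 ≤ m ∧ m ≤ 6 * k - 2 ∨ m = 6 * k - 1) with
      h | h | h | h | h | h | h | h | h | h
    · exact station 1 1 (by omega) (by omega)
    · exact .inl (mem_inner (by omega))
    · exact station k 1 (by omega) (by omega)
    · exact .inl (mem_inner (by omega))
    · exact station (k + 4) ((k - 2) / 3) (by omega) (by omega)
    · exact .inl (mem_inner (by omega))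
    · exact station (2 * k + 3) ((k + 1) / 3) (by omega) (by omega)
    · exact .inl (mem_inner (by omega))
    · exact station (4 * k + 4) ((2 * k - 4) / 3) (by omega) (by omega)
    · exact .inl (mem_inner (by omega))
  · rw [exists_mem_cycNear_iff]
    simp only [shiftedInner, shiftedOuter, mem_union, mem_Ico, mem_insert, mem_singleton,
      mem_everyThird]
    omega

theorem card_shiftedInner_le {k : ℕ} (hk : 4 ≤ k) : #(shiftedInner k) ≤ 2 * k := by
  grw [shiftedInner, card_union_le, card_union_le, Nat.card_Ico, Nat.card_Ico, card_le_four]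
  omega

theorem card_shiftedOuter_le (k : ℕ) :
    #(shiftedOuter k) ≤ 2 + (k - 2) / 3 + (k + 1) / 3 + (2 * k - 4) / 3 := by
  grw [shiftedOuter, card_union_le, card_union_le, card_union_le, card_union_le,
    card_everyThird_le, card_everyThird_le, card_everyThird_le, card_everyThird_le,
    card_everyThird_le]

theorem gamma_P6k_upper (k : ℕ) (hk : 4 ≤ k) :
    gamma (petersen (6 * k) k) ≤ (10 * k + 2) / 3 := by
  have : NeZero (6 * k) := ⟨by omega⟩
  by_cases hk3 : k % 3 = 2
  · grw [(isPetersenCover_shifted hk3).gamma_le, card_shiftedInner_le hk,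
      card_shiftedOuter_le]
    omega
  · grw [(isPetersenCover_block k).gamma_le, card_blockInner_le, card_blockOuter_le]
    obtain ⟨t, rfl | rfl⟩ : ∃ t, k = 3 * t ∨ k = 3 * t + 1 := ⟨k / 3, by omega⟩ <;> omega
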